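/- Let I ⊆ ℝ be an interval, let α, β ∈ ℝ, σ > 0 and K̂ > 0 be constants, and let a_T, b_T, a_S, b_S : I → ℝ be differentiable functions such that P_T(t,x) := exp(−a_T(t) − x·b_T(t)) and P_S(t,x) := exp(−a_S(t) − x·b_S(t)) each satisfy ∂ₜP + (α + βx)·∂ₓP + (σ²/2)·∂²ₓₓP = x·P on I × ℝ. Let σ_c : I → (0, ∞) be differentiable with σ_c′(t) + (σ²/2)·(b_T(t) − b_S(t))²/σ_c(t) = 0 for all t ∈ I. Define d₁(t,x) := (1/σ_c(t))·log(P_S(t,x)/(P_T(t,x)·K̂)) + σ_c(t)/2 and d₂(t,x) := d₁(t,x) − σ_c(t). Then f(t,x) := P_S(t,x)·Φ(d₁(t,x)) − K̂·P_T(t,x)·Φ(d₂(t,x)) satisfies ∂ₜf + (α + βx)·∂ₓf + (σ²/2)·∂²ₓₓf = x·f on I × ℝ. -/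

import Mathlib

/-- The standard normal cumulative distribution function `Φ`. -/
noncomputable def stdNormalCDF (y : ℝ) : ℝ :=
  (Real.sqrt (2 * Real.pi))⁻¹ * ∫ u in Set.Iio y, Real.exp (-(u ^ 2) / 2)

noncomputable def stdGauss (y : ℝ) : ℝ :=
  (Real.sqrt (2 * Real.pi))⁻¹ * Real.exp (-(y ^ 2) / 2)

lemma gauss_integrable : MeasureTheory.Integrable (fun u : ℝ => Real.exp (-(u ^ 2) / 2)) := by
  have h := integrable_exp_neg_mul_sq (by norm_num : (0:ℝ) < 1/2)
  convert h using 2 with u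
  ring_nf

lemma gauss_continuous : Continuous (fun u : ℝ => Real.exp (-(u ^ 2) / 2)) := by
  continuity

lemma hasDerivAt_stdNormalCDF (y : ℝ) : HasDerivAt stdNormalCDF (stdGauss y) y := by
  have key : ∀ z : ℝ, stdNormalCDF z = (Real.sqrt (2 * Real.pi))⁻¹ *
      ((∫ u in Set.Iic (0:ℝ), Real.exp (-(u ^ 2) / 2))
        + ∫ u in (0:ℝ)..z, Real.exp (-(u ^ 2) / 2)) := by
    intro z
    rw [stdNormalCDF]
    congr 1
    rw [← MeasureTheory.integral_Iic_eq_integral_Iio]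
    have h3 := intervalIntegral.integral_Iic_sub_Iic
      (gauss_integrable.integrableOn (s := Set.Iic (0:ℝ)))
      (gauss_integrable.integrableOn (s := Set.Iic z)) (μ := MeasureTheory.volume)
    linarith
  have hfun : stdNormalCDF = fun z => (Real.sqrt (2 * Real.pi))⁻¹ *
      ((∫ u in Set.Iic (0:ℝ), Real.exp (-(u ^ 2) / 2))
        + ∫ u in (0:ℝ)..z, Real.exp (-(u ^ 2) / 2)) := funext key
  rw [hfun, stdGauss]
  have h1 : HasDerivAt (fun z : ℝ => ∫ u in (0:ℝ)..z, Real.exp (-(u ^ 2) / 2))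
      (Real.exp (-(y ^ 2) / 2)) y :=
    intervalIntegral.integral_hasDerivAt_right
      (gauss_integrable.intervalIntegrable)
      gauss_continuous.aestronglyMeasurable.stronglyMeasurableAtFilter
      gauss_continuous.continuousAt
  simpa using ((h1.const_add _).const_mul ((Real.sqrt (2 * Real.pi))⁻¹))

lemma hasDerivAt_stdGauss (y : ℝ) : HasDerivAt stdGauss (-y * stdGauss y) y := by
  have h1 : HasDerivAt (fun z : ℝ => -(z ^ 2) / 2) (-y) y := by
    have h0 := ((hasDerivAt_pow 2 y).fun_neg.div_const 2)
    exact h0.congr_deriv (by ring)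
  have := (h1.exp.const_mul ((Real.sqrt (2 * Real.pi))⁻¹))
  simp only [stdGauss]
  exact this.congr_deriv (by ring)

/-- Black–Scholes-type verification lemma: if two exponential-affine bond prices `P_T`,
`P_S` solve the Vasicek pricing PDE `∂ₜP + (α+βx)∂ₓP + ½σ²∂²ₓₓP = xP` on `I × ℝ`, and
`σ_c > 0` solves `σ_c′ + ½σ²(b_T − b_S)²/σ_c = 0`, then the call-value combination
`f = P_S·Φ(d₁) − K̂·P_T·Φ(d₂)` solves the same PDE on `I × ℝ`. -/
theorem call_value_verification
    (I : Set ℝ) (hI : I.OrdConnected)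
    (α β σ Khat : ℝ) (hσ : 0 < σ) (hK : 0 < Khat)
    (aT bT aS bS : ℝ → ℝ)
    (haT : ∀ t ∈ I, DifferentiableAt ℝ aT t)
    (hbT : ∀ t ∈ I, DifferentiableAt ℝ bT t)
    (haS : ∀ t ∈ I, DifferentiableAt ℝ aS t)
    (hbS : ∀ t ∈ I, DifferentiableAt ℝ bS t)
    (PT PS : ℝ → ℝ → ℝ)
    (hPT : ∀ t x : ℝ, PT t x = Real.exp (-(aT t) - x * bT t))
    (hPS : ∀ t x : ℝ, PS t x = Real.exp (-(aS t) - x * bS t))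
    (hPT_pde : ∀ t ∈ I, ∀ x : ℝ,
      deriv (fun r => PT r x) t + (α + β * x) * deriv (fun y => PT t y) x
        + σ ^ 2 / 2 * deriv (deriv (fun y => PT t y)) x = x * PT t x)
    (hPS_pde : ∀ t ∈ I, ∀ x : ℝ,
      deriv (fun r => PS r x) t + (α + β * x) * deriv (fun y => PS t y) x
        + σ ^ 2 / 2 * deriv (deriv (fun y => PS t y)) x = x * PS t x)
    (σc : ℝ → ℝ)
    (hσcpos : ∀ t ∈ I, 0 < σc t)
    (hσcdiff : ∀ t ∈ I, DifferentiableAt ℝ σc t)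
    (hσcode : ∀ t ∈ I, deriv σc t + σ ^ 2 / 2 * (bT t - bS t) ^ 2 / σc t = 0)
    (d₁ d₂ f : ℝ → ℝ → ℝ)
    (hd₁ : ∀ t x : ℝ, d₁ t x =
      (σc t)⁻¹ * Real.log (PS t x / (PT t x * Khat)) + σc t / 2)
    (hd₂ : ∀ t x : ℝ, d₂ t x = d₁ t x - σc t)
    (hfdef : ∀ t x : ℝ,
      f t x = PS t x * stdNormalCDF (d₁ t x) - Khat * PT t x * stdNormalCDF (d₂ t x)) :
    ∀ t ∈ I, ∀ x : ℝ,
      deriv (fun r => f r x) t + (α + β * x) * deriv (fun y => f t y) x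
        + σ ^ 2 / 2 * deriv (deriv (fun y => f t y)) x = x * f t x := by
  intro t ht x
  have hs : 0 < σc t := hσcpos t ht
  have hsne : σc t ≠ 0 := ne_of_gt hs
  have hPTpos : ∀ y : ℝ, 0 < PT t y := fun y => by rw [hPT]; exact Real.exp_pos _
  have hPSpos : ∀ y : ℝ, 0 < PS t y := fun y => by rw [hPS]; exact Real.exp_pos _
  -- explicit formula for d₁
  have hd1e : ∀ r y : ℝ, d₁ r y =
      (σc r)⁻¹ * ((aT r - aS r) + y * (bT r - bS r) - Real.log Khat) + σc r / 2 := by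
    intro r y
    rw [hd₁, hPS, hPT,
      Real.log_div (Real.exp_ne_zero _) (mul_ne_zero (Real.exp_ne_zero _) (ne_of_gt hK)),
      Real.log_mul (Real.exp_ne_zero _) (ne_of_gt hK), Real.log_exp, Real.log_exp]
    ring
  -- x-derivatives of PS, PT
  have hPSx : ∀ y : ℝ, HasDerivAt (fun y => PS t y) (-(bS t) * PS t y) y := by
    intro y
    have heq : (fun y => PS t y) = fun y => Real.exp (-(aS t) - y * bS t) :=
      funext fun y => hPS t y
    rw [heq, hPS]
    have h0 : HasDerivAt (fun y : ℝ => -(aS t) - y * bS t) (-(bS t)) y := by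
      simpa using ((hasDerivAt_id y).mul_const (bS t)).const_sub (-(aS t))
    have := h0.exp
    convert this using 1
    ring
  have hPTx : ∀ y : ℝ, HasDerivAt (fun y => PT t y) (-(bT t) * PT t y) y := by
    intro y
    have heq : (fun y => PT t y) = fun y => Real.exp (-(aT t) - y * bT t) :=
      funext fun y => hPT t y
    rw [heq, hPT]
    have h0 : HasDerivAt (fun y : ℝ => -(aT t) - y * bT t) (-(bT t)) y := by
      simpa using ((hasDerivAt_id y).mul_const (bT t)).const_sub (-(aT t))
    have := h0.exp
    convert this using 1
    ring
  -- x-derivatives of d₁, d₂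
  have hd1x : ∀ y : ℝ, HasDerivAt (fun y => d₁ t y) ((σc t)⁻¹ * (bT t - bS t)) y := by
    intro y
    have heq : (fun y => d₁ t y) = fun y =>
        (σc t)⁻¹ * ((aT t - aS t) + y * (bT t - bS t) - Real.log Khat) + σc t / 2 :=
      funext fun y => hd1e t y
    rw [heq]
    have h0 : HasDerivAt (fun y : ℝ => (aT t - aS t) + y * (bT t - bS t) - Real.log Khat)
        (bT t - bS t) y := by
      simpa using (((hasDerivAt_id y).mul_const (bT t - bS t)).const_add
        (aT t - aS t)).sub_const (Real.log Khat)
    exact (h0.const_mul ((σc t)⁻¹)).add_const (σc t / 2)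
  have hd2x : ∀ y : ℝ, HasDerivAt (fun y => d₂ t y) ((σc t)⁻¹ * (bT t - bS t)) y := by
    intro y
    have heq : (fun y => d₂ t y) = fun y => d₁ t y - σc t := funext fun y => hd₂ t y
    rw [heq]
    exact (hd1x y).sub_const (σc t)
  -- t-derivatives of PS, PT
  have hPSt : HasDerivAt (fun r => PS r x) ((-(deriv aS t) - x * deriv bS t) * PS t x) t := by
    have heq : (fun r => PS r x) = fun r => Real.exp (-(aS r) - x * bS r) :=
      funext fun r => hPS r x
    rw [heq, hPS]
    have h0 : HasDerivAt (fun r : ℝ => -(aS r) - x * bS r)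
        (-(deriv aS t) - x * deriv bS t) t :=
      ((haS t ht).hasDerivAt.neg).sub (((hbS t ht).hasDerivAt.const_mul x))
    have := h0.exp
    convert this using 1
    ring
  have hPTt : HasDerivAt (fun r => PT r x) ((-(deriv aT t) - x * deriv bT t) * PT t x) t := by
    have heq : (fun r => PT r x) = fun r => Real.exp (-(aT r) - x * bT r) :=
      funext fun r => hPT r x
    rw [heq, hPT]
    have h0 : HasDerivAt (fun r : ℝ => -(aT r) - x * bT r)
        (-(deriv aT t) - x * deriv bT t) t :=
      ((haT t ht).hasDerivAt.neg).sub (((hbT t ht).hasDerivAt.const_mul x))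
    have := h0.exp
    convert this using 1
    ring
  -- t-derivative of d₁ (opaque value) and of d₂
  have hd1tdiff : DifferentiableAt ℝ (fun r => d₁ r x) t := by
    have heq : (fun r => d₁ r x) = fun r =>
        (σc r)⁻¹ * ((aT r - aS r) + x * (bT r - bS r) - Real.log Khat) + σc r / 2 :=
      funext fun r => hd1e r x
    rw [heq]
    exact (((hσcdiff t ht).inv hsne).mul ((((haT t ht).sub (haS t ht)).add
      (((hbT t ht).sub (hbS t ht)).const_mul x)).sub_const _)).add ((hσcdiff t ht).div_const 2)
  have hd1t : HasDerivAt (fun r => d₁ r x) (deriv (fun r => d₁ r x) t) t :=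
    hd1tdiff.hasDerivAt
  have hd2t : HasDerivAt (fun r => d₂ r x) (deriv (fun r => d₁ r x) t - deriv σc t) t := by
    have heq : (fun r => d₂ r x) = fun r => d₁ r x - σc r := funext fun r => hd₂ r x
    rw [heq]
    exact hd1t.sub (hσcdiff t ht).hasDerivAt
  -- scalar PDE identities
  have hPSd1 : deriv (fun y => PS t y) = fun y => -(bS t) * PS t y :=
    funext fun y => (hPSx y).deriv
  have hPTd1 : deriv (fun y => PT t y) = fun y => -(bT t) * PT t y :=
    funext fun y => (hPTx y).deriv
  have hPSxx : deriv (deriv (fun y => PS t y)) x = -(bS t) * (-(bS t) * PS t x) := by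
    rw [hPSd1]; exact ((hPSx x).const_mul (-(bS t))).deriv
  have hPTxx : deriv (deriv (fun y => PT t y)) x = -(bT t) * (-(bT t) * PT t x) := by
    rw [hPTd1]; exact ((hPTx x).const_mul (-(bT t))).deriv
  have eqS : -(deriv aS t) - x * deriv bS t - (α + β * x) * bS t
      + σ ^ 2 / 2 * bS t ^ 2 = x := by
    have h := hPS_pde t ht x
    rw [hPSt.deriv, (hPSx x).deriv, hPSxx] at h
    have h2 : (-(deriv aS t) - x * deriv bS t - (α + β * x) * bS t
        + σ ^ 2 / 2 * bS t ^ 2) * PS t x = x * PS t x := by linear_combination h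
    exact mul_right_cancel₀ (ne_of_gt (hPSpos x)) h2
  have eqT : -(deriv aT t) - x * deriv bT t - (α + β * x) * bT t
      + σ ^ 2 / 2 * bT t ^ 2 = x := by
    have h := hPT_pde t ht x
    rw [hPTt.deriv, (hPTx x).deriv, hPTxx] at h
    have h2 : (-(deriv aT t) - x * deriv bT t - (α + β * x) * bT t
        + σ ^ 2 / 2 * bT t ^ 2) * PT t x = x * PT t x := by linear_combination h
    exact mul_right_cancel₀ (ne_of_gt (hPTpos x)) h2
  -- the ODE, cleared of denominators
  have hode0 : deriv σc t * σc t + σ ^ 2 / 2 * (bT t - bS t) ^ 2 = 0 := by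
    have h := hσcode t ht
    field_simp at h
    linarith
  have hsinv : σc t * (σc t)⁻¹ = 1 := mul_inv_cancel₀ hsne
  -- the gaussian identity
  have hgid : PS t x * stdGauss (d₁ t x) = Khat * PT t x * stdGauss (d₂ t x) := by
    have h2 : d₁ t x ^ 2 - d₂ t x ^ 2
        = 2 * ((aT t - aS t) + x * (bT t - bS t) - Real.log Khat) := by
      rw [hd₂ t x, hd1e t x]
      field_simp
      ring
    have h3 : Real.exp (-(d₁ t x ^ 2) / 2) = Real.exp (-(d₂ t x ^ 2) / 2) *
        Real.exp (-((aT t - aS t) + x * (bT t - bS t) - Real.log Khat)) := by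
      rw [← Real.exp_add]; congr 1; linarith
    have hexpL : Real.exp (-((aT t - aS t) + x * (bT t - bS t) - Real.log Khat))
        = Khat * Real.exp (-(aT t - aS t) - x * (bT t - bS t)) := by
      rw [show -((aT t - aS t) + x * (bT t - bS t) - Real.log Khat)
        = Real.log Khat + (-(aT t - aS t) - x * (bT t - bS t)) by ring,
        Real.exp_add, Real.exp_log hK]
    have hcomb : Real.exp (-(aS t) - x * bS t)
        * Real.exp (-(aT t - aS t) - x * (bT t - bS t))
        = Real.exp (-(aT t) - x * bT t) := by
      rw [← Real.exp_add]; congr 1; ring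
    rw [stdGauss, stdGauss, h3, hexpL, hPS, hPT]
    linear_combination ((Real.sqrt (2 * Real.pi))⁻¹
      * Real.exp (-(d₂ t x ^ 2) / 2) * Khat) * hcomb
  -- derivative of f in the t-direction
  have hft : HasDerivAt (fun r => f r x)
      ((-(deriv aS t) - x * deriv bS t) * PS t x * stdNormalCDF (d₁ t x)
        + PS t x * (stdGauss (d₁ t x) * deriv (fun r => d₁ r x) t)
        - (Khat * ((-(deriv aT t) - x * deriv bT t) * PT t x) * stdNormalCDF (d₂ t x)
          + Khat * PT t x * (stdGauss (d₂ t x)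
            * (deriv (fun r => d₁ r x) t - deriv σc t)))) t := by
    have heq : (fun r => f r x) = fun r =>
        PS r x * stdNormalCDF (d₁ r x) - Khat * PT r x * stdNormalCDF (d₂ r x) :=
      funext fun r => hfdef r x
    rw [heq]
    exact (hPSt.mul ((hasDerivAt_stdNormalCDF (d₁ t x)).comp t hd1t)).sub
      ((hPTt.const_mul Khat).mul ((hasDerivAt_stdNormalCDF (d₂ t x)).comp t hd2t))
  -- first derivative of f in the x-direction, as a function
  have hFx : ∀ y : ℝ, HasDerivAt (fun y => f t y)
      (-(bS t) * PS t y * stdNormalCDF (d₁ t y)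
        + PS t y * (stdGauss (d₁ t y) * ((σc t)⁻¹ * (bT t - bS t)))
        - (Khat * (-(bT t) * PT t y) * stdNormalCDF (d₂ t y)
          + Khat * PT t y * (stdGauss (d₂ t y) * ((σc t)⁻¹ * (bT t - bS t))))) y := by
    intro y
    have heq : (fun y => f t y) = fun y =>
        PS t y * stdNormalCDF (d₁ t y) - Khat * PT t y * stdNormalCDF (d₂ t y) :=
      funext fun y => hfdef t y
    rw [heq]
    exact ((hPSx y).mul ((hasDerivAt_stdNormalCDF (d₁ t y)).comp y (hd1x y))).sub
      (((hPTx y).const_mul Khat).mul ((hasDerivAt_stdNormalCDF (d₂ t y)).comp y (hd2x y)))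
  have hderiv1 : deriv (fun y => f t y) = fun y =>
      -(bS t) * PS t y * stdNormalCDF (d₁ t y)
        + PS t y * (stdGauss (d₁ t y) * ((σc t)⁻¹ * (bT t - bS t)))
        - (Khat * (-(bT t) * PT t y) * stdNormalCDF (d₂ t y)
          + Khat * PT t y * (stdGauss (d₂ t y) * ((σc t)⁻¹ * (bT t - bS t)))) :=
    funext fun y => (hFx y).deriv
  -- second derivative of f in the x-direction
  have hXXd : deriv (deriv (fun y => f t y)) x =
      (-(bS t) * (-(bS t) * PS t x) * stdNormalCDF (d₁ t x)
        + -(bS t) * PS t x * (stdGauss (d₁ t x) * ((σc t)⁻¹ * (bT t - bS t))))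
      + (-(bS t) * PS t x * (stdGauss (d₁ t x) * ((σc t)⁻¹ * (bT t - bS t)))
        + PS t x * (-(d₁ t x) * stdGauss (d₁ t x) * ((σc t)⁻¹ * (bT t - bS t))
          * ((σc t)⁻¹ * (bT t - bS t))))
      - ((Khat * (-(bT t) * (-(bT t) * PT t x)) * stdNormalCDF (d₂ t x)
        + Khat * (-(bT t) * PT t x) * (stdGauss (d₂ t x) * ((σc t)⁻¹ * (bT t - bS t))))
      + (Khat * (-(bT t) * PT t x) * (stdGauss (d₂ t x) * ((σc t)⁻¹ * (bT t - bS t)))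
        + Khat * PT t x * (-(d₂ t x) * stdGauss (d₂ t x) * ((σc t)⁻¹ * (bT t - bS t))
          * ((σc t)⁻¹ * (bT t - bS t))))) := by
    rw [hderiv1]
    have p1 := (((hPSx x).const_mul (-(bS t))).mul
        ((hasDerivAt_stdNormalCDF (d₁ t x)).comp x (hd1x x)))
    have p2 := ((hPSx x).mul (((hasDerivAt_stdGauss (d₁ t x)).comp x (hd1x x)).mul_const
        ((σc t)⁻¹ * (bT t - bS t))))
    have p3 := ((((hPTx x).const_mul (-(bT t))).const_mul Khat).mul
        ((hasDerivAt_stdNormalCDF (d₂ t x)).comp x (hd2x x)))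
    have p4 := (((hPTx x).const_mul Khat).mul
        (((hasDerivAt_stdGauss (d₂ t x)).comp x (hd2x x)).mul_const
        ((σc t)⁻¹ * (bT t - bS t))))
    exact HasDerivAt.deriv ((p1.add p2).sub (p3.add p4))
  rw [hft.deriv, (hFx x).deriv, hXXd, hfdef]
  linear_combination (PS t x * stdNormalCDF (d₁ t x)) * eqS
    - (Khat * PT t x * stdNormalCDF (d₂ t x)) * eqT
    + (PS t x * stdGauss (d₁ t x) * (σc t)⁻¹) * hode0
    + ((deriv (fun r => d₁ r x) t - deriv σc t)
        + (α + β * x) * ((σc t)⁻¹ * (bT t - bS t))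
        - σ ^ 2 / 2 * (2 * bT t * ((σc t)⁻¹ * (bT t - bS t))
          + d₂ t x * ((σc t)⁻¹ * (bT t - bS t)) ^ 2)) * hgid
    + (-(PS t x * stdGauss (d₁ t x)) * (σ ^ 2 / 2) * (σc t)⁻¹ * (bT t - bS t) ^ 2
        - PS t x * stdGauss (d₁ t x) * deriv σc t) * hsinv
    + (PS t x * stdGauss (d₁ t x) * (σ ^ 2 / 2) * (σc t)⁻¹ ^ 2 * (bT t - bS t) ^ 2)
        * (hd₂ t x)
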